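/- arXiv:1404.0407 — 4 statements merged into one kernel-verified Lean document; each statement's English description precedes it below -/
import Mathlib

section
/- Let $k \geq 1$ be a natural number, let $F$ be holomorphic in a neighborhood of the closed unit disc $\overline{\Delta}$ and nonvanishing on $\overline{\Delta} \setminus \{0\}$, and let $G$ be holomorphic on the open unit disc $\Delta$ with $G = o(F)$ as $s \to 0$. If there exists $t \in \Delta \setminus \{0\}$ such that $F(\omega t) = G(\omega t)$ for all $k$-th roots of unity $\omega$, then $\sup_{\Delta} |G| \geq C_1 |t|^{-k}$, where $C_1 = \min_{|s|=1} |F(s)| > 0$. -/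
open Metric Filter Topology Finset Asymptotics

/-!
Put `φ = G / F`, holomorphic on `Δ` once the removable singularity at `0` is filled by `φ 0 = 0`.
Near the unit circle `|F| ≥ C₁ - ε`, so the maximum principle gives `|φ| ≤ M / C₁` on `Δ`, where
`M = sup_Δ |G|`. For a primitive `k`-th root of unity `ω`, the sum `h s = ∑ⱼ φ (ωʲ s)` kills every
Taylor coefficient of `φ` of order `1, …, k - 1`, and `φ 0 = 0`, so `h = O(|s|ᵏ)` and the Schwarz
lemma of order `k` gives `|h s| ≤ k (M / C₁) |s|ᵏ`. At `s = t` every summand equals `1`, whence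
`1 ≤ (M / C₁) |t|ᵏ`.
-/

theorem IsPrimitiveRoot.sum_pow_pow_eq_zero {R : Type*} [CommRing R] [IsDomain R] {ω : R}
    {k n : ℕ} (hω : IsPrimitiveRoot ω k) (hn : n ≠ 0) (hnk : n < k) :
    ∑ j ∈ range k, (ω ^ j) ^ n = 0 := by
  simp_rw [← pow_mul, mul_comm _ n, pow_mul]
  refine eq_zero_of_ne_zero_of_mul_left_eq_zero
    (sub_ne_zero_of_ne (hω.pow_ne_one_of_pos_of_lt hn hnk).symm) ?_
  rw [mul_neg_geom_sum, ← pow_mul, mul_comm, pow_mul, hω.pow_eq_one, one_pow, sub_self]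

theorem exists_lt_of_lt_on_sphere {X : Type*} [MetricSpace X] [ProperSpace X] {f : X → ℝ}
    {x : X} {R c : ℝ} (hf : ContinuousOn f (closedBall x R)) (hc : ∀ z ∈ sphere x R, c < f z) :
    ∃ ρ < R, ∀ z, ρ ≤ dist z x → dist z x ≤ R → c < f z := by
  set K := closedBall x R ∩ f ⁻¹' Set.Iic c
  have hK : IsClosed K := hf.preimage_isClosed_of_isClosed isClosed_closedBall isClosed_Iic
  have hKball : K ⊆ ball x R := fun z ⟨hzR, hzc⟩ =>
    (mem_closedBall.1 hzR).lt_of_ne fun h => (hc z h).not_ge hzc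
  obtain ⟨ρ, hρR, hKρ⟩ := exists_lt_subset_ball hK hKball
  exact ⟨ρ, hρR, fun z hρz hzR => lt_of_not_ge fun hzc =>
    (mem_ball.1 (hKρ ⟨mem_closedBall.2 hzR, hzc⟩)).not_ge hρz⟩

theorem exists_isLeast_norm_on_unit_sphere {F : ℂ → ℂ} (hF : ContinuousOn F (sphere 0 1)) :
    ∃ s₀ : ℂ, ‖s₀‖ = 1 ∧ IsLeast {x : ℝ | ∃ s : ℂ, ‖s‖ = 1 ∧ x = ‖F s‖} ‖F s₀‖ := by
  obtain ⟨s₀, hs₀, hmin⟩ := (isCompact_sphere (0 : ℂ) 1).exists_isMinOn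
    (NormedSpace.sphere_nonempty.2 zero_le_one) hF.norm
  refine ⟨s₀, by simpa using hs₀, ⟨s₀, by simpa using hs₀, rfl⟩, ?_⟩
  rintro _ ⟨s, hs, rfl⟩
  exact hmin (by simpa using hs)

theorem differentiableOn_update_div_of_isLittleO {F G : ℂ → ℂ} {s : Set ℂ} {c : ℂ}
    (hs : s ∈ 𝓝 c) (hG : DifferentiableOn ℂ G (s \ {c})) (hF : DifferentiableOn ℂ F (s \ {c}))
    (hF0 : ∀ z ∈ s \ {c}, F z ≠ 0) (hGF : G =o[𝓝[≠] c] F) :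
    DifferentiableOn ℂ (Function.update (G / F) c 0) s := by
  have hlim : Tendsto (G / F) (𝓝[≠] c) (𝓝 0) := hGF.tendsto_div_nhds_zero
  rw [← hlim.limUnder_eq]
  exact Complex.differentiableOn_update_limUnder_of_isLittleO hs (hG.div hF hF0)
    (hlim.sub_const _).norm.isBoundedUnder_le.isLittleO_sub_self_inv

section

variable {E : Type*} [NormedAddCommGroup E] [NormedSpace ℂ E]

theorem norm_mul_le_of_forall_norm_mul_le {φ : ℂ → E} {F : ℂ → ℂ} {c M : ℝ} {s : ℂ}
    (hφ : DifferentiableOn ℂ φ (ball 0 1)) (hF : ContinuousOn F (closedBall 0 1)) (hc0 : 0 < c)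
    (hc : ∀ z : ℂ, ‖z‖ = 1 → c ≤ ‖F z‖)
    (hM : ∀ z ∈ ball (0 : ℂ) 1, z ≠ 0 → ‖φ z‖ * ‖F z‖ ≤ M) (hs : s ∈ ball (0 : ℂ) 1) :
    ‖φ s‖ * c ≤ M := by
  refine le_of_tendsto (x := 𝓝[<] c)
    ((continuous_const_mul ‖φ s‖).tendsto c |>.mono_left nhdsWithin_le_nhds) ?_
  filter_upwards [Ioo_mem_nhdsLT hc0] with c' ⟨hc'0, hc'c⟩
  obtain ⟨ρ, hρ1, hρ⟩ := exists_lt_of_lt_on_sphere hF.norm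
    fun z hz => hc'c.trans_le (hc z (by simpa using hz))
  simp only [dist_zero_right] at hρ
  have hs1 : ‖s‖ < 1 := mem_ball_zero_iff.1 hs
  set r := (max ρ ‖s‖ + 1) / 2
  have hρr : ρ < r := by grind
  have hsr : ‖s‖ < r := by grind
  have hr1 : r < 1 := by grind
  have hr0 : 0 < r := (norm_nonneg s).trans_lt hsr
  have hdc : DiffContOnCl ℂ φ (ball 0 r) :=
    (hφ.mono (closure_ball_subset_closedBall.trans (closedBall_subset_ball hr1))).diffContOnCl
  have hfrontier : ∀ z ∈ frontier (ball (0 : ℂ) r), ‖φ z‖ ≤ M / c' := by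
    intro z hz
    rw [frontier_ball _ hr0.ne', mem_sphere_zero_iff_norm] at hz
    have hFz : c' < ‖F z‖ := hρ z (hz ▸ hρr.le) (hz ▸ hr1.le)
    have hz0 : z ≠ 0 := by rintro rfl; simp [hr0.ne] at hz
    rw [le_div_iff₀ hc'0]
    exact (mul_le_mul_of_nonneg_left hFz.le (norm_nonneg _)).trans
      (hM z (mem_ball_zero_iff.2 (hz ▸ hr1)) hz0)
  exact (le_div_iff₀ hc'0).1 <| Complex.norm_le_of_forall_mem_frontier_norm_le isBounded_ball hdc
    hfrontier (subset_closure (mem_ball_zero_iff.2 hsr))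

theorem sum_partialSum_comp_mul_rootsOfUnity (p : FormalMultilinearSeries ℂ ℂ E) {ω : ℂ}
    {k : ℕ} (hω : IsPrimitiveRoot ω k) (s : ℂ) :
    ∑ j ∈ range k, p.partialSum k (ω ^ j * s) = k • p.coeff 0 := by
  simp only [FormalMultilinearSeries.partialSum, p.apply_eq_pow_smul_coeff, mul_pow]
  rw [Finset.sum_comm, Finset.sum_eq_single 0]
  · simp
  · intro n hn hn0
    rw [← Finset.sum_smul, ← Finset.sum_mul, hω.sum_pow_pow_eq_zero hn0 (mem_range.1 hn),
      zero_mul, zero_smul]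
  · intro h0
    rw [mem_range, not_lt, Nat.le_zero] at h0
    simp [h0]

theorem isBigO_sum_comp_mul_rootsOfUnity {φ : ℂ → E} {ω : ℂ} {k : ℕ}
    (hφ : AnalyticAt ℂ φ 0) (hω : IsPrimitiveRoot ω k) :
    (fun s => ∑ j ∈ range k, φ (ω ^ j * s) - k • φ 0) =O[𝓝 0] fun s => ‖s‖ ^ k := by
  obtain ⟨p, hp⟩ := hφ
  have taylor : ∀ j ∈ range k,
      (fun s => φ (ω ^ j * s) - p.partialSum k (ω ^ j * s)) =O[𝓝 0] fun s => ‖s‖ ^ k := by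
    intro j hj
    have hωj : ‖ω ^ j‖ = 1 := by
      rw [norm_pow, hω.norm'_eq_one (by grind), one_pow]
    simpa [Function.comp_def, norm_mul, hωj] using (hp.isBigO_sub_partialSum_pow k).comp_tendsto
      ((continuous_const_mul (ω ^ j)).tendsto' 0 0 (mul_zero _))
  refine (IsBigO.sum taylor).congr_left fun s => ?_
  rw [Finset.sum_apply, Finset.sum_sub_distrib, sum_partialSum_comp_mul_rootsOfUnity p hω s]
  simp [FormalMultilinearSeries.coeff, hp.coeff_zero]

theorem norm_sum_comp_mul_rootsOfUnity_le [CompleteSpace E] {φ : ℂ → E} {ω : ℂ} {k : ℕ}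
    {B : ℝ} {z : ℂ} (hk : 0 < k) (hω : IsPrimitiveRoot ω k)
    (hφ : DifferentiableOn ℂ φ (ball 0 1)) (hφ0 : φ 0 = 0)
    (hB : ∀ s ∈ ball (0 : ℂ) 1, ‖φ s‖ ≤ B) (hz : z ∈ ball (0 : ℂ) 1) :
    ‖∑ j ∈ range k, φ (ω ^ j * z)‖ ≤ k * B * ‖z‖ ^ k := by
  have hmaps : ∀ j, Set.MapsTo (ω ^ j * ·) (ball (0 : ℂ) 1) (ball 0 1) := fun j s hs => by
    simpa [norm_mul, hω.norm'_eq_one hk.ne'] using hs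
  set h : ℂ → E := fun s => ∑ j ∈ range k, φ (ω ^ j * s)
  have h0 : h 0 = 0 := by simp [h, hφ0]
  have hd : DifferentiableOn ℂ h (ball 0 1) :=
    DifferentiableOn.fun_sum fun j _ => hφ.comp (by fun_prop) (hmaps j)
  have hbound : Set.MapsTo h (ball 0 1) (closedBall (h 0) (k * B)) := fun s hs => by
    rw [h0, mem_closedBall_zero_iff]
    refine (norm_sum_le _ _).trans ?_
    simpa using Finset.sum_le_sum (s := range k) fun j _ => hB _ (hmaps j hs)
  have hsmall : (h · - h 0) =o[𝓝 0] fun w => ‖w - 0‖ ^ (k - 1) := by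
    have := isBigO_sum_comp_mul_rootsOfUnity (hφ.analyticAt (ball_mem_nhds 0 one_pos)) hω
    simp only [hφ0, smul_zero, sub_zero] at this
    refine (this.congr_left fun s => by simp [h0, h]).trans_isLittleO ?_
    simpa using (isLittleO_pow_pow (𝕜 := ℂ) (Nat.sub_lt hk one_pos)).norm_norm
  simpa [h0, Nat.sub_add_cancel hk] using
    Complex.dist_le_mul_div_pow_of_mapsTo_ball_of_isLittleO hd hbound hsmall hz

end

theorem one_le_mul_norm_pow_of_forall_pow_eq_one {φ : ℂ → ℂ} {k : ℕ} {B : ℝ} {t : ℂ} (hk : 0 < k)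
    (hφ : DifferentiableOn ℂ φ (ball 0 1)) (hφ0 : φ 0 = 0)
    (hB : ∀ s ∈ ball (0 : ℂ) 1, ‖φ s‖ ≤ B) (ht : t ∈ ball (0 : ℂ) 1)
    (hφt : ∀ ω : ℂ, ω ^ k = 1 → φ (ω * t) = 1) :
    1 ≤ B * ‖t‖ ^ k := by
  obtain ⟨ω, hω⟩ : ∃ ω : ℂ, IsPrimitiveRoot ω k := ⟨_, Complex.isPrimitiveRoot_exp k hk.ne'⟩
  have hsum := norm_sum_comp_mul_rootsOfUnity_le hk hω hφ hφ0 hB ht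
  have hroots : ∀ j, φ (ω ^ j * t) = 1 := fun j =>
    hφt _ (by rw [← pow_mul, mul_comm, pow_mul, hω.pow_eq_one, one_pow])
  simp only [hroots, sum_const, card_range, nsmul_eq_mul, mul_one, Complex.norm_natCast] at hsum
  exact le_of_mul_le_mul_left (by simpa [mul_assoc] using hsum) (by exact_mod_cast hk)

/-- Root-of-unity lemma (Proposition 2.2): if `F` is holomorphic near the closed unit
disc, nonvanishing off `0`, `G` is holomorphic on the unit disc with `G = o(F)` at `0`,
and `F` and `G` agree at the points `ω t` for all `k`-th roots of unity `ω`, then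
`sup_Δ |G| ≥ C₁ |t|⁻ᵏ` where `C₁ = min_{|s|=1} |F s| > 0`. -/
theorem stmt0 (k : ℕ) (hk : 1 ≤ k) (F G : ℂ → ℂ)
    (hF : ∃ U : Set ℂ, IsOpen U ∧ closedBall (0 : ℂ) 1 ⊆ U ∧ DifferentiableOn ℂ F U)
    (hFne : ∀ s ∈ closedBall (0 : ℂ) 1, s ≠ 0 → F s ≠ 0)
    (hG : DifferentiableOn ℂ G (ball (0 : ℂ) 1))
    (hlittle : G =o[nhdsWithin (0 : ℂ) {0}ᶜ] F)
    (t : ℂ) (ht : t ∈ ball (0 : ℂ) 1) (ht0 : t ≠ 0)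
    (hagree : ∀ ω : ℂ, ω ^ k = 1 → F (ω * t) = G (ω * t))
    (C₁ : ℝ) (hC₁ : C₁ = sInf {x : ℝ | ∃ s : ℂ, ‖s‖ = 1 ∧ x = ‖F s‖}) :
    0 < C₁ ∧ ∀ M : ℝ, (∀ s ∈ ball (0 : ℂ) 1, ‖G s‖ ≤ M) → C₁ / ‖t‖ ^ k ≤ M := by
  obtain ⟨U, -, hUsub, hFd⟩ := hF
  have hFc : ContinuousOn F (closedBall 0 1) := hFd.continuousOn.mono hUsub
  obtain ⟨s₀, hs₀, hleast⟩ := exists_isLeast_norm_on_unit_sphere (hFc.mono sphere_subset_closedBall)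
  rw [hleast.csInf_eq] at hC₁
  subst hC₁
  have hC₁pos : 0 < ‖F s₀‖ := norm_pos_iff.2 (hFne s₀ (by simp [hs₀]) (by rintro rfl; simp at hs₀))
  refine ⟨hC₁pos, fun M hM => ?_⟩
  have hFne' : ∀ z ∈ ball (0 : ℂ) 1 \ {0}, F z ≠ 0 := fun z hz =>
    hFne z (ball_subset_closedBall hz.1) hz.2
  set φ := Function.update (G / F) 0 0
  have hφ_eq : ∀ z ≠ 0, φ z = G z / F z := fun z hz => Function.update_of_ne hz _ _
  have hφ : DifferentiableOn ℂ φ (ball 0 1) := differentiableOn_update_div_of_isLittleO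
    (ball_mem_nhds 0 one_pos) (hG.mono Set.sdiff_subset)
    (hFd.mono (Set.sdiff_subset.trans (ball_subset_closedBall.trans hUsub))) hFne' hlittle
  have hφM : ∀ s ∈ ball (0 : ℂ) 1, ‖φ s‖ ≤ M / ‖F s₀‖ := fun s hs =>
    (le_div_iff₀ hC₁pos).2 <| norm_mul_le_of_forall_norm_mul_le hφ hFc hC₁pos
      (fun z hz => hleast.2 ⟨z, hz, rfl⟩)
      (fun z hz hz0 => by
        rw [hφ_eq z hz0, norm_div, div_mul_cancel₀ _ (norm_ne_zero_iff.2 (hFne' z ⟨hz, hz0⟩))]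
        exact hM z hz) hs
  refine (div_le_iff₀ (pow_pos (norm_pos_iff.2 ht0) k)).2 ?_
  have hone := one_le_mul_norm_pow_of_forall_pow_eq_one hk hφ (by simp [φ]) hφM ht fun ω hω => by
    have hz0 : ω * t ≠ 0 :=
      mul_ne_zero (by rintro rfl; simp [zero_pow (by omega : k ≠ 0)] at hω) ht0
    rw [hφ_eq _ hz0, ← hagree ω hω, div_self (hFne' _ ⟨?_, hz0⟩)]
    simpa [norm_mul, Complex.norm_eq_one_of_pow_eq_one hω (by omega)] using ht
  rwa [div_mul_eq_mul_div, le_div_iff₀ hC₁pos, one_mul] at hone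
end

section
/- Special case of the root-of-unity lemma: let $p, k \in \mathbb{N}$ with $k \geq 1$, let $F(s) = s^p$, and let $G$ be holomorphic on the open unit disc $\Delta$ with $G(s) = o(s^p)$ as $s \to 0$. If $t \in \Delta \setminus \{0\}$ satisfies $G(\omega t) = (\omega t)^p$ for every $k$-th root of unity $\omega$, then $\sup_{s \in \Delta} |G(s)| \geq |t|^{-k}$. -/
/-!
Averaging `ω⁻ᵖ • G (ω * s)` over the `k`-th roots of unity `ω` gives a holomorphic `G₁` with the
same bound `M`, with `G₁ t = tᵖ`, with `G₁ = o(sᵖ)`, and with `G₁ (ζ * s) = ζᵖ • G₁ s` for a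
primitive `k`-th root `ζ`. If `G₁ = sᵐ • g` with `g 0 ≠ 0`, the symmetry gives `ζᵐ = ζᵖ`, i.e.
`m ≡ p [MOD k]`, and `G₁ = o(sᵖ)` gives `p < m`; hence `m ≥ p + k`, i.e. `G₁ = O(s^(p+k))`.
Iterating the Schwarz lemma `p + k` times then gives `‖t‖ᵖ = ‖G₁ t‖ ≤ M ‖t‖^(p+k)`.
-/

open Metric Filter Topology Asymptotics Polynomial Finset

section NthRootsAverage

variable {𝕜 E : Type*} [RCLike 𝕜] [NormedAddCommGroup E] [NormedSpace 𝕜 E]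
  {k p : ℕ}

lemma norm_eq_one_of_mem_nthRootsFinset {ω : 𝕜} (hω : ω ∈ nthRootsFinset k (1 : 𝕜)) :
    ‖ω‖ = 1 := by
  have hk : 0 < k := Nat.pos_of_ne_zero fun h => by simp [h] at hω
  rw [mem_nthRootsFinset hk] at hω
  exact (pow_eq_one_iff_of_nonneg (norm_nonneg ω) hk.ne').mp (by rw [← norm_pow, hω, norm_one])

noncomputable def nthRootsAverage (k p : ℕ) (G : 𝕜 → E) (s : 𝕜) : E :=
  (#(nthRootsFinset k (1 : 𝕜)) : 𝕜)⁻¹ • ∑ ω ∈ nthRootsFinset k (1 : 𝕜), ω⁻¹ ^ p • G (ω * s)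

variable {G : 𝕜 → E}

lemma nthRootsAverage_mul {ζ : 𝕜} (hζ : ζ ∈ nthRootsFinset k (1 : 𝕜)) (s : 𝕜) :
    nthRootsAverage k p G (ζ * s) = ζ ^ p • nthRootsAverage k p G s := by
  have hk : 0 < k := Nat.pos_of_ne_zero fun h => by simp [h] at hζ
  have hζ0 : ζ ≠ 0 := ne_zero_of_mem_nthRootsFinset one_ne_zero hζ
  have hζinv : ζ⁻¹ ∈ nthRootsFinset k (1 : 𝕜) := by
    rw [mem_nthRootsFinset hk] at hζ ⊢
    rw [inv_pow, hζ, inv_one]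
  unfold nthRootsAverage
  rw [smul_comm (ζ ^ p)]
  congr 1
  rw [Finset.smul_sum]
  refine Finset.sum_nbij' (· * ζ) (· * ζ⁻¹)
    (fun ω hω => by simpa using mul_mem_nthRootsFinset hω hζ)
    (fun ω hω => by simpa using mul_mem_nthRootsFinset hω hζinv)
    (fun ω _ => mul_inv_cancel_right₀ hζ0 ω) (fun ω _ => inv_mul_cancel_right₀ hζ0 ω)
    fun ω _ => ?_
  have hweight : ζ ^ p * (ω * ζ)⁻¹ ^ p = ω⁻¹ ^ p := by
    rw [mul_inv, mul_pow, inv_pow ζ, mul_comm, mul_assoc, inv_mul_cancel₀ (pow_ne_zero p hζ0),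
      mul_one]
  rw [smul_smul, hweight, mul_assoc]

lemma card_nthRootsFinset_one_pos (hk : k ≠ 0) : 0 < #(nthRootsFinset k (1 : 𝕜)) :=
  card_pos.mpr ⟨1, one_mem_nthRootsFinset (Nat.pos_of_ne_zero hk)⟩

lemma nthRootsAverage_eq_of_forall {t : 𝕜} {v : E}
    (hk : k ≠ 0) (h : ∀ ω ∈ nthRootsFinset k (1 : 𝕜), G (ω * t) = ω ^ p • v) :
    nthRootsAverage k p G t = v := by
  have hterm : ∀ ω ∈ nthRootsFinset k (1 : 𝕜), ω⁻¹ ^ p • G (ω * t) = v := fun ω hω => by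
    rw [h ω hω, smul_smul, inv_pow,
      inv_mul_cancel₀ (pow_ne_zero _ (ne_zero_of_mem_nthRootsFinset one_ne_zero hω)), one_smul]
  have hcard : (#(nthRootsFinset k (1 : 𝕜)) : 𝕜) ≠ 0 :=
    Nat.cast_ne_zero.mpr (card_nthRootsFinset_one_pos hk).ne'
  rw [nthRootsAverage, Finset.sum_congr rfl hterm, Finset.sum_const, ← Nat.cast_smul_eq_nsmul 𝕜,
    smul_smul, inv_mul_cancel₀ hcard, one_smul]

lemma norm_nthRootsAverage_le {s : 𝕜} {M : ℝ} (hk : k ≠ 0)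
    (hM : ∀ ω ∈ nthRootsFinset k (1 : 𝕜), ‖G (ω * s)‖ ≤ M) :
    ‖nthRootsAverage k p G s‖ ≤ M := by
  have hcard : (0 : ℝ) < #(nthRootsFinset k (1 : 𝕜)) := by
    exact_mod_cast card_nthRootsFinset_one_pos hk
  have hsum : ‖∑ ω ∈ nthRootsFinset k (1 : 𝕜), ω⁻¹ ^ p • G (ω * s)‖ ≤
      #(nthRootsFinset k (1 : 𝕜)) * M := by
    refine (norm_sum_le _ _).trans ?_
    rw [← nsmul_eq_mul]
    refine Finset.sum_le_card_nsmul _ _ _ fun ω hω => ?_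
    rw [norm_smul, norm_pow, norm_inv, norm_eq_one_of_mem_nthRootsFinset hω, inv_one, one_pow,
      one_mul]
    exact hM ω hω
  rw [nthRootsAverage, norm_smul, norm_inv, RCLike.norm_natCast, inv_mul_le_iff₀ hcard]
  exact hsum

lemma mul_mem_ball_zero_of_mem_nthRootsFinset {ω s : 𝕜} {r : ℝ}
    (hω : ω ∈ nthRootsFinset k (1 : 𝕜)) (hs : s ∈ ball 0 r) : ω * s ∈ ball 0 r := by
  rwa [mem_ball_zero_iff, norm_mul, norm_eq_one_of_mem_nthRootsFinset hω, one_mul,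
    ← mem_ball_zero_iff]

lemma DifferentiableOn.nthRootsAverage {r : ℝ} (hG : DifferentiableOn 𝕜 G (ball 0 r)) :
    DifferentiableOn 𝕜 (nthRootsAverage k p G) (ball 0 r) :=
  .const_smul (.fun_sum fun ω hω => .const_smul (hG.comp (by fun_prop)
    fun s hs => mul_mem_ball_zero_of_mem_nthRootsFinset hω hs) _) _

lemma tendsto_mul_left_nhdsNE_zero {c : 𝕜} (hc : c ≠ 0) :
    Tendsto (c * ·) (𝓝[≠] 0) (𝓝[≠] 0) := by
  simpa [Tendsto] using ((Homeomorph.mulLeft₀ c hc).map_punctured_nhds_eq 0).le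

lemma Asymptotics.IsLittleO.nthRootsAverage (hG : G =o[𝓝[≠] 0] (· ^ p)) :
    nthRootsAverage k p G =o[𝓝[≠] 0] (· ^ p) := by
  refine .const_smul_left (.fun_sum fun ω hω => .const_smul_left ?_ _) _
  have hω0 := ne_zero_of_mem_nthRootsFinset one_ne_zero hω
  refine (hG.comp_tendsto (tendsto_mul_left_nhdsNE_zero hω0)).trans_isBigO ?_
  simpa [Function.comp_def, mul_pow] using
    (isBigO_refl (· ^ p) (𝓝[≠] (0 : 𝕜))).const_mul_left (ω ^ p)

end NthRootsAverage

section VanishingOrder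

variable {𝕜 E : Type*} [NontriviallyNormedField 𝕜] [NormedAddCommGroup E] [NormedSpace 𝕜 E]
  {f g : 𝕜 → E} {m p : ℕ}

lemma lt_of_eventuallyEq_pow_smul_of_isLittleO (hg : ContinuousAt g 0) (hg0 : g 0 ≠ 0)
    (hfg : ∀ᶠ s in 𝓝 0, f s = s ^ m • g s) (hf : f =o[𝓝[≠] 0] (· ^ p)) : p < m := by
  by_contra! hmp
  have hg_eq : (fun s => (s ^ m)⁻¹ • f s) =ᶠ[𝓝[≠] 0] g := by
    filter_upwards [nhdsWithin_le_nhds hfg, self_mem_nhdsWithin] with s hs hs0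
    rw [hs, smul_smul, inv_mul_cancel₀ (pow_ne_zero _ hs0), one_smul]
  have hpow_eq : (fun s : 𝕜 => (s ^ m)⁻¹ • s ^ p) =ᶠ[𝓝[≠] 0] (· ^ (p - m)) := by
    filter_upwards [self_mem_nhdsWithin] with s hs0
    rw [smul_eq_mul, ← div_eq_inv_mul, pow_sub₀ _ hs0 hmp, div_eq_mul_inv]
  have hg_small : g =o[𝓝[≠] 0] (· ^ (p - m)) :=
    ((isBigO_refl (fun s : 𝕜 => (s ^ m)⁻¹) (𝓝[≠] 0)).smul_isLittleO hf).congr' hg_eq hpow_eq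
  have hpow_bdd : (· ^ (p - m)) =O[𝓝[≠] (0 : 𝕜)] fun _ => (1 : 𝕜) :=
    ((continuous_pow (p - m)).tendsto 0).isBigO_one (F := 𝕜).mono nhdsWithin_le_nhds
  exact hg0 (tendsto_nhds_unique (hg.tendsto.mono_left nhdsWithin_le_nhds)
    ((isLittleO_one_iff 𝕜).mp (hg_small.trans_isBigO hpow_bdd)))

lemma pow_eq_pow_of_eventuallyEq_pow_smul {ζ : 𝕜} (hg : ContinuousAt g 0) (hg0 : g 0 ≠ 0)
    (hfg : ∀ᶠ s in 𝓝 0, f s = s ^ m • g s) (hsymm : ∀ᶠ s in 𝓝 0, f (ζ * s) = ζ ^ p • f s) :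
    ζ ^ m = ζ ^ p := by
  have hmul : Tendsto (ζ * ·) (𝓝 0) (𝓝 0) := by
    simpa using (continuous_const_mul ζ).tendsto (0 : 𝕜)
  have hg_symm : (fun s => ζ ^ m • g (ζ * s)) =ᶠ[𝓝[≠] 0] fun s => ζ ^ p • g s := by
    filter_upwards [nhdsWithin_le_nhds (hmul.eventually hfg), nhdsWithin_le_nhds hfg,
      nhdsWithin_le_nhds hsymm, self_mem_nhdsWithin] with s hζs hs hsymms hs0
    rw [hζs, hs, mul_pow, mul_smul, smul_comm (ζ ^ m), smul_comm (ζ ^ p)] at hsymms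
    exact smul_right_injective E (pow_ne_zero m hs0) hsymms
  have hlim : ζ ^ m • g 0 = ζ ^ p • g 0 :=
    tendsto_nhds_unique
      (((tendsto_const_nhds.smul (hg.tendsto.comp hmul)).mono_left nhdsWithin_le_nhds).congr'
        hg_symm)
      ((tendsto_const_nhds.smul hg.tendsto).mono_left nhdsWithin_le_nhds)
  exact smul_left_injective 𝕜 hg0 hlim

lemma isBigO_pow_add_of_comp_mul_eq {ζ : 𝕜} {k : ℕ} (hζ : IsPrimitiveRoot ζ k) (hk : k ≠ 0)
    (hf : AnalyticAt 𝕜 f 0) (hsymm : ∀ᶠ s in 𝓝 0, f (ζ * s) = ζ ^ p • f s)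
    (ho : f =o[𝓝[≠] 0] (· ^ p)) : f =O[𝓝 0] (· ^ (p + k)) := by
  by_cases hzero : ∀ᶠ s in 𝓝 0, f s = 0
  · exact (isBigO_zero _ _).congr' (hzero.mono fun _ h => h.symm) EventuallyEq.rfl
  obtain ⟨m, g, hg, hg0, hfg⟩ := hf.exists_eventuallyEq_pow_smul_nonzero_iff.mpr hzero
  simp only [sub_zero] at hfg
  have hpm := lt_of_eventuallyEq_pow_smul_of_isLittleO hg.continuousAt hg0 hfg ho
  have hmod : m ≡ p [MOD k] := by
    rw [hζ.eq_orderOf, ← (hζ.isOfFinOrder hk).pow_eq_pow_iff_modEq]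
    exact pow_eq_pow_of_eventuallyEq_pow_smul hg.continuousAt hg0 hfg hsymm
  obtain ⟨r, rfl⟩ : ∃ r, m = p + k + r := by
    have := Nat.le_of_dvd (by omega) ((Nat.modEq_iff_dvd' hpm.le).mp hmod.symm)
    exact ⟨m - p - k, by omega⟩
  have hrest : (fun s => s ^ r • g s) =O[𝓝 0] fun _ => (1 : 𝕜) :=
    ((continuous_pow r).continuousAt.smul hg.continuousAt).tendsto.isBigO_one (F := 𝕜)
  refine ((isBigO_refl (fun s : 𝕜 => s ^ (p + k)) (𝓝 0)).smul hrest).congr' ?_ (by simp)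
  filter_upwards [hfg] with s hs
  rw [hs, ← mul_smul, ← pow_add]

end VanishingOrder

section Schwarz

variable {E : Type*} [NormedAddCommGroup E] [NormedSpace ℂ E] {f : ℂ → E} {M : ℝ}

lemma norm_dslope_zero_le_of_forall_norm_le (hf : DifferentiableOn ℂ f (ball 0 1)) (h0 : f 0 = 0)
    (hM : ∀ s ∈ ball (0 : ℂ) 1, ‖f s‖ ≤ M) {s : ℂ} (hs : s ∈ ball (0 : ℂ) 1) :
    ‖dslope f 0 s‖ ≤ M := by
  simpa using Complex.norm_dslope_le_div_of_mapsTo_ball hf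
    (fun z hz => by simpa [h0] using hM z hz) hs

lemma norm_le_mul_norm_pow_of_isBigO [CompleteSpace E] {n : ℕ}
    (hf : DifferentiableOn ℂ f (ball 0 1)) (hM : ∀ s ∈ ball (0 : ℂ) 1, ‖f s‖ ≤ M)
    (ho : f =O[𝓝[≠] 0] (· ^ n)) {s : ℂ} (hs : s ∈ ball (0 : ℂ) 1) : ‖f s‖ ≤ M * ‖s‖ ^ n := by
  induction n generalizing f with
  | zero => simpa using hM s hs
  | succ n ih =>
    have hcont : ContinuousAt f 0 := hf.continuousOn.continuousAt (ball_mem_nhds 0 one_pos)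
    have hpow : Tendsto (· ^ (n + 1)) (𝓝[≠] (0 : ℂ)) (𝓝 0) :=
      ((continuous_pow _).tendsto' 0 0 (by simp)).mono_left nhdsWithin_le_nhds
    have h0 : f 0 = 0 :=
      tendsto_nhds_unique (hcont.tendsto.mono_left nhdsWithin_le_nhds) (ho.trans_tendsto hpow)
    have hslope : dslope f 0 =O[𝓝[≠] 0] (· ^ n) := by
      refine ((isBigO_refl (fun z : ℂ => z⁻¹) (𝓝[≠] 0)).smul ho).congr' ?_ ?_
      · filter_upwards [self_mem_nhdsWithin] with z hz
        rw [dslope_of_ne _ hz, slope_def_module, h0, sub_zero, sub_zero]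
      · filter_upwards [self_mem_nhdsWithin] with z hz
        rw [smul_eq_mul, pow_succ', inv_mul_cancel_left₀ hz]
    have hbound := ih ((Complex.differentiableOn_dslope (ball_mem_nhds 0 one_pos)).mpr hf)
      (fun z hz => norm_dslope_zero_le_of_forall_norm_le hf h0 hM hz) hslope
    have hfactor : s • dslope f 0 s = f s := by
      simpa [h0] using sub_smul_dslope f 0 s
    calc ‖f s‖ = ‖s‖ * ‖dslope f 0 s‖ := by rw [← hfactor, norm_smul]
      _ ≤ ‖s‖ * (M * ‖s‖ ^ n) := mul_le_mul_of_nonneg_left hbound (norm_nonneg s)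
      _ = M * ‖s‖ ^ (n + 1) := by ring

end Schwarz

/-- Special case of the root-of-unity lemma with `F s = s ^ p`. -/
theorem stmt1 (p k : ℕ) (hk : 1 ≤ k) (G : ℂ → ℂ)
    (hG : DifferentiableOn ℂ G (ball (0 : ℂ) 1))
    (hlittle : G =o[nhdsWithin (0 : ℂ) {0}ᶜ] fun s => s ^ p)
    (t : ℂ) (ht : t ∈ ball (0 : ℂ) 1) (ht0 : t ≠ 0)
    (hagree : ∀ ω : ℂ, ω ^ k = 1 → G (ω * t) = (ω * t) ^ p) :
    ∀ M : ℝ, (∀ s ∈ ball (0 : ℂ) 1, ‖G s‖ ≤ M) → (‖t‖ ^ k)⁻¹ ≤ M := by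
  intro M hM
  have hk0 : k ≠ 0 := by omega
  have hζ := Complex.isPrimitiveRoot_exp k hk0
  have hdiff := hG.nthRootsAverage (k := k) (p := p)
  have hsymm (s : ℂ) := nthRootsAverage_mul (G := G) (p := p) (hζ.mem_nthRootsFinset hk) s
  have hbigO := isBigO_pow_add_of_comp_mul_eq hζ hk0 (hdiff.analyticAt (ball_mem_nhds 0 one_pos))
    (.of_forall hsymm) hlittle.nthRootsAverage
  have hval : nthRootsAverage k p G t = t ^ p := nthRootsAverage_eq_of_forall hk0 fun ω hω => by
    rw [hagree ω ((mem_nthRootsFinset hk 1).mp hω), mul_pow, smul_eq_mul]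
  have hbound := norm_le_mul_norm_pow_of_isBigO hdiff
    (fun s hs => norm_nthRootsAverage_le hk0 fun ω hω =>
      hM _ (mul_mem_ball_zero_of_mem_nthRootsFinset hω hs))
    (hbigO.mono nhdsWithin_le_nhds) ht
  rw [hval, norm_pow, pow_add, mul_left_comm] at hbound
  have htpos : 0 < ‖t‖ := norm_pos_iff.mpr ht0
  rw [inv_le_iff_one_le_mul₀ (pow_pos htpos k)]
  exact (le_mul_iff_one_le_right (pow_pos htpos p)).mp hbound
end

section
/- Let $U \subseteq \mathbb{C}^m$ be open, $x \in U$, and let $V \subseteq U$ be an open neighborhood of $x$. Suppose $f : V \to \mathbb{C}$ and $u : V \to [-\infty, \infty]$ are measurable with $\int_V |f|^2 e^{-u} \, d\lambda < \infty$ (Lebesgue measure on $\mathbb{C}^m$). Write points of $\mathbb{C}^m$ as $(z_1, z')$ with $z_1 \in \mathbb{C}$ and assume $x = 0$. Then $\liminf_{\sigma \to 0} |\sigma|^2 \int_{\{z' : (\sigma, z') \in V\}} |f(\sigma, z')|^2 e^{-u(\sigma, z')} \, d\lambda_{2m-2}(z') = 0$. -/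
/-!
By Tonelli, `∫_V |f|² e^{-u}` is the integral over `σ ∈ ℂ` of the slice integrals `Φ σ`, so `Φ` is
integrable. If `|σ|² Φ σ ≥ c > 0` on a punctured disc around `0`, then `Φ ≥ c |σ|⁻²` there; but
`|σ|⁻²` is not integrable near `0` in `ℂ ≅ ℝ²` (nor is `‖x‖⁻ᵈ` in any real space of dimension `d`).
-/

open Filter MeasureTheory
open scoped ENNReal NNReal

/-- `e^{-u}` for an extended-real-valued weight `u`, valued in `[0,∞]`,
with the conventions `e^{-(+∞)} = 0` and `e^{-(-∞)} = ∞`. -/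
noncomputable def expNeg (x : EReal) : ℝ≥0∞ :=
  if x = ⊤ then 0 else if x = ⊥ then ⊤ else ENNReal.ofReal (Real.exp (-x.toReal))

open Metric Module Set
open scoped Topology

section

variable {E : Type*} [NormedAddCommGroup E] [NormedSpace ℝ E] [FiniteDimensional ℝ E]
  [Nontrivial E] [MeasurableSpace E] [BorelSpace E] (μ : Measure E) [μ.IsAddHaarMeasure]

lemma not_integrableOn_ball_inv_norm_pow_finrank {r : ℝ} (hr : 0 < r) :
    ¬ IntegrableOn (fun x : E ↦ (‖x‖ ^ finrank ℝ E)⁻¹) (ball 0 r) μ := by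
  have hd : 0 < finrank ℝ E := finrank_pos
  rw [integrableOn_fun_norm_addHaar μ (f := fun y ↦ (y ^ finrank ℝ E)⁻¹),
    integrableOn_congr_fun (g := fun y ↦ y ^ (-1 : ℝ)) ?_ measurableSet_Ioo,
    intervalIntegral.integrableOn_Ioo_rpow_iff hr]
  · norm_num
  · intro y hy
    dsimp only
    rw [Real.rpow_neg_one, smul_eq_mul, ← pow_sub_one_mul hd.ne', mul_inv,
      mul_inv_cancel_left₀ (pow_ne_zero _ hy.1.ne')]

lemma lintegral_ball_inv_enorm_pow_finrank_eq_top {r : ℝ} (hr : 0 < r) :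
    ∫⁻ x in ball (0 : E) r, (‖x‖ₑ ^ finrank ℝ E)⁻¹ ∂μ = ∞ := by
  have h_ofReal : ∫⁻ x in ball (0 : E) r, ENNReal.ofReal (‖x‖ ^ finrank ℝ E)⁻¹ ∂μ = ∞ := by
    by_contra h
    refine not_integrableOn_ball_inv_norm_pow_finrank μ hr ⟨by fun_prop, ?_⟩
    exact (hasFiniteIntegral_iff_ofReal (ae_of_all _ fun x ↦ by positivity)).2
      (lt_top_iff_ne_top.2 h)
  refine top_le_iff.mp (h_ofReal ▸ lintegral_mono fun x ↦ ?_)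
  rcases eq_or_ne x 0 with rfl | hx
  -- at `0` the real integrand is the junk value `0⁻¹ = 0`, the extended one is `∞`
  · simp [zero_pow finrank_pos.ne']
  · rw [ENNReal.ofReal_inv_of_pos (by positivity), ENNReal.ofReal_pow (norm_nonneg x),
      ofReal_norm]

lemma liminf_enorm_pow_finrank_mul_eq_zero {Φ : E → ℝ≥0∞} (hΦ : ∫⁻ x, Φ x ∂μ ≠ ∞) :
    liminf (fun x ↦ ‖x‖ₑ ^ finrank ℝ E * Φ x) (𝓝[≠] 0) = 0 := by
  by_contra hne
  obtain ⟨c, hc0, hc⟩ := exists_between (pos_iff_ne_zero.mpr hne)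
  obtain ⟨ε, hε, hball⟩ := Metric.eventually_nhds_iff.mp
    (eventually_nhdsWithin_iff.mp (eventually_lt_of_lt_liminf hc))
  have hlower : ∀ᵐ x ∂μ, x ∈ ball (0 : E) ε → c * (‖x‖ₑ ^ finrank ℝ E)⁻¹ ≤ Φ x := by
    filter_upwards [compl_mem_ae_iff.mpr (measure_singleton (μ := μ) 0)] with x hx0 hx
    have hx0' : ‖x‖ₑ ^ finrank ℝ E ≠ 0 := pow_ne_zero _ (enorm_ne_zero.mpr hx0)
    rw [← div_eq_mul_inv, ENNReal.div_le_iff_le_mul (.inl hx0') (.inl (by simp)), mul_comm]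
    exact (hball (by simpa using hx) hx0).le
  apply hΦ
  refine top_le_iff.mp ?_
  calc ∞ = ∫⁻ x in ball (0 : E) ε, c * (‖x‖ₑ ^ finrank ℝ E)⁻¹ ∂μ := by
        rw [lintegral_const_mul' _ _ (ne_top_of_lt hc),
          lintegral_ball_inv_enorm_pow_finrank_eq_top μ hε, ENNReal.mul_top hc0.ne']
    _ ≤ ∫⁻ x in ball (0 : E) ε, Φ x ∂μ := setLIntegral_mono_ae' measurableSet_ball hlower
    _ ≤ ∫⁻ x, Φ x ∂μ := setLIntegral_le_lintegral _ _

end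

lemma lintegral_lintegral_slice_eq_setLIntegral {α β : Type*} [MeasurableSpace α]
    [MeasurableSpace β] {μ : Measure α} {ν : Measure β} [SFinite ν] {g : α × β → ℝ≥0∞}
    (hg : Measurable g) {V : Set (α × β)} (hV : MeasurableSet V) :
    ∫⁻ x, ∫⁻ y in {y | (x, y) ∈ V}, g (x, y) ∂ν ∂μ = ∫⁻ z in V, g z ∂μ.prod ν := by
  rw [← lintegral_indicator hV, lintegral_prod _ (hg.indicator hV).aemeasurable]
  exact lintegral_congr fun x ↦ (lintegral_indicator (measurable_prodMk_left hV) _).symm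

lemma measurable_expNeg : Measurable expNeg :=
  Measurable.ite measurableSet_eq measurable_const <|
    Measurable.ite measurableSet_eq measurable_const <| by fun_prop

theorem stmt6_general (n : ℕ) (V : Set (ℂ × (Fin n → ℂ))) (hV : IsOpen V)
    (f : ℂ × (Fin n → ℂ) → ℂ) (hf : Measurable f)
    (u : ℂ × (Fin n → ℂ) → EReal) (hu : Measurable u)
    (hint : ∫⁻ z in V, (‖f z‖₊ : ℝ≥0∞) ^ 2 * expNeg (u z) < ∞) :
    Filter.liminf
      (fun σ : ℂ => (‖σ‖₊ : ℝ≥0∞) ^ 2 *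
        ∫⁻ z' in {z' : Fin n → ℂ | (σ, z') ∈ V}, (‖f (σ, z')‖₊ : ℝ≥0∞) ^ 2 * expNeg (u (σ, z')))
      (nhdsWithin (0 : ℂ) {0}ᶜ) = 0 := by
  have hg : Measurable fun z ↦ (‖f z‖₊ : ℝ≥0∞) ^ 2 * expNeg (u z) :=
    (hf.nnnorm.coe_nnreal_ennreal.pow_const 2).mul (measurable_expNeg.comp hu)
  have hslices := lintegral_lintegral_slice_eq_setLIntegral (μ := volume) (ν := volume) hg
    hV.measurableSet
  rw [← Measure.volume_eq_prod] at hslices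
  have hliminf := liminf_enorm_pow_finrank_mul_eq_zero volume (hslices ▸ hint.ne)
  rwa [Complex.finrank_real_complex] at hliminf

/-- The "only if" direction of Lemma 2.1 in slice form: if `∫_V |f|² e^{-u} < ∞`
(on a neighborhood `V` of `0` in `ℂ × ℂⁿ`), then the slice integrals satisfy
`liminf_{σ → 0} |σ|² ∫_{V ∩ {z₁ = σ}} |f|² e^{-u} = 0`. -/
theorem stmt6 (n : ℕ) (U V : Set (ℂ × (Fin n → ℂ))) (hU : IsOpen U) (hV : IsOpen V)
    (h0 : (0 : ℂ × (Fin n → ℂ)) ∈ V) (hVU : V ⊆ U)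
    (f : ℂ × (Fin n → ℂ) → ℂ) (hf : Measurable f)
    (u : ℂ × (Fin n → ℂ) → EReal) (hu : Measurable u)
    (hint : ∫⁻ z in V, (‖f z‖₊ : ℝ≥0∞) ^ 2 * expNeg (u z) < ∞) :
    Filter.liminf
      (fun σ : ℂ => (‖σ‖₊ : ℝ≥0∞) ^ 2 *
        ∫⁻ z' in {z' : Fin n → ℂ | (σ, z') ∈ V}, (‖f (σ, z')‖₊ : ℝ≥0∞) ^ 2 * expNeg (u (σ, z')))
      (nhdsWithin (0 : ℂ) {0}ᶜ) = 0 :=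
  stmt6_general n V hV f hf u hu hint
end

section
/- With $\sigma_\nu = 1 - 1/\nu$ and $f_\nu(z) \equiv 1/\nu^2$ for $\nu \geq 1$, the section $f = (f_\nu)$ of the trivial $\ell^2$-bundle over the unit disc satisfies: for every $0 < \rho \leq 1$, $\int_{\{|z|<\rho\}} \sum_\nu \nu^{-4} |z|^{-2(1 - 1/\nu)} \, d\lambda_2(z) < \infty$, but for every $j \geq 1$ and every $\rho > 0$, $\int_{\{|z|<\rho\}} \sum_\nu \nu^{-4} |z|^{-2(1+1/j)(1 - 1/\nu)} \, d\lambda_2(z) = \infty$. -/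
/-!
In polar coordinates `∫_{|z|<ρ} |z|^{-s} dλ₂ = 2π ∫₀^ρ r^{1-s} dr`, which is `2π ρ^{2-s}/(2-s)`
for `s < 2` and infinite for `s ≥ 2`. With `s = 2σ_ν = 2 - 2/(ν+1)` and `ρ ≤ 1`, the `ν`-th term
of the first series integrates to at most `π (ν+1)^{-3}`, which is summable. In the second series
the exponent of the term `ν = j` is exactly `2`, so that term alone has infinite integral.
-/

open Metric MeasureTheory Set
open scoped ENNReal

theorem lintegral_Ioo_rpow_of_neg_one_lt {t ρ : ℝ} (ht : -1 < t) (hρ : 0 < ρ) :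
    ∫⁻ r in Ioo 0 ρ, ENNReal.ofReal (r ^ t) = ENNReal.ofReal (ρ ^ (t + 1) / (t + 1)) := by
  have hint : IntegrableOn (fun r : ℝ ↦ r ^ t) (Ioo 0 ρ) :=
    (intervalIntegral.integrableOn_Ioo_rpow_iff hρ).2 ht
  rw [← ofReal_integral_eq_lintegral_ofReal hint
      (ae_restrict_of_forall_mem measurableSet_Ioo fun r hr ↦ Real.rpow_nonneg hr.1.le t),
    ← integral_Ioc_eq_integral_Ioo, ← intervalIntegral.integral_of_le hρ.le,
    integral_rpow (Or.inl ht), Real.zero_rpow (by linarith), sub_zero]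

theorem lintegral_Ioo_rpow_of_le_neg_one {t ρ : ℝ} (ht : t ≤ -1) (hρ : 0 < ρ) :
    ∫⁻ r in Ioo 0 ρ, ENNReal.ofReal (r ^ t) = ∞ := by
  by_contra h
  have hint : IntegrableOn (fun r : ℝ ↦ r ^ t) (Ioo 0 ρ) := by
    refine ⟨by fun_prop, (hasFiniteIntegral_iff_ofReal ?_).2 (lt_top_iff_ne_top.2 h)⟩
    exact ae_restrict_of_forall_mem measurableSet_Ioo fun r hr ↦ Real.rpow_nonneg hr.1.le t
  linarith [(intervalIntegral.integrableOn_Ioo_rpow_iff hρ).1 hint]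

namespace MeasureTheory

variable {E : Type*} [NormedAddCommGroup E] [NormedSpace ℝ E] [Nontrivial E]
  [FiniteDimensional ℝ E] [MeasurableSpace E] [BorelSpace E] (μ : Measure E) [μ.IsAddHaarMeasure]

theorem lintegral_fun_norm_addHaar {f : ℝ → ℝ≥0∞} (hf : Measurable f) :
    ∫⁻ x, f ‖x‖ ∂μ = Module.finrank ℝ E * μ (ball 0 1) *
      ∫⁻ r in Ioi 0, ENNReal.ofReal (r ^ (Module.finrank ℝ E - 1)) * f r := by
  have hfs : Measurable fun p : sphere (0 : E) 1 × Ioi (0 : ℝ) ↦ f p.2 :=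
    hf.comp (measurable_subtype_coe.comp measurable_snd)
  calc ∫⁻ x, f ‖x‖ ∂μ
      = ∫⁻ x : ({0}ᶜ : Set E), f ‖x.1‖ ∂(μ.comap Subtype.val) := by
        rw [lintegral_subtype_comap (measurableSet_singleton _).compl (fun x ↦ f ‖x‖),
          restrict_compl_singleton]
    _ = ∫⁻ p, f p.2 ∂(μ.toSphere.prod (Measure.volumeIoiPow (Module.finrank ℝ E - 1))) := by
        rw [← (μ.measurePreserving_homeomorphUnitSphereProd).lintegral_comp hfs]
        simp
    _ = μ.toSphere univ * ∫⁻ r, f r ∂(Measure.volumeIoiPow (Module.finrank ℝ E - 1)) := by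
        rw [lintegral_prod _ hfs.aemeasurable]
        simp only [lintegral_const]
        exact mul_comm _ _
    _ = _ := by
        rw [μ.toSphere_apply_univ, Measure.volumeIoiPow,
          lintegral_withDensity_eq_lintegral_mul _ (by fun_prop)
            (g := fun r : Ioi (0 : ℝ) ↦ f r) (hf.comp measurable_subtype_coe),
          ← lintegral_subtype_comap measurableSet_Ioi (fun r ↦ ENNReal.ofReal (r ^ _) * f r)]
        rfl

theorem setLIntegral_ball_fun_norm_addHaar {f : ℝ → ℝ≥0∞} (hf : Measurable f) (ρ : ℝ) :
    ∫⁻ x in ball 0 ρ, f ‖x‖ ∂μ = Module.finrank ℝ E * μ (ball 0 1) *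
      ∫⁻ r in Ioo 0 ρ, ENNReal.ofReal (r ^ (Module.finrank ℝ E - 1)) * f r := by
  have hball : (ball (0 : E) ρ).indicator (fun x ↦ f ‖x‖) = fun x ↦ (Iio ρ).indicator f ‖x‖ := by
    ext x; simp [indicator]
  rw [← lintegral_indicator measurableSet_ball, hball,
    lintegral_fun_norm_addHaar μ (hf.indicator measurableSet_Iio), ← Ioi_inter_Iio, inter_comm,
    ← Measure.restrict_restrict measurableSet_Iio, ← lintegral_indicator measurableSet_Iio]
  simp only [indicator_mul_right]

theorem setLIntegral_ball_nnnorm_rpow_inv (s ρ : ℝ) :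
    ∫⁻ x in ball 0 ρ, ((‖x‖₊ : ℝ≥0∞) ^ s)⁻¹ ∂μ = Module.finrank ℝ E * μ (ball 0 1) *
      ∫⁻ r in Ioo 0 ρ, ENNReal.ofReal (r ^ ((Module.finrank ℝ E : ℝ) - 1 - s)) := by
  have hnorm : ∀ x : E, ((‖x‖₊ : ℝ≥0∞) ^ s)⁻¹ = (ENNReal.ofReal ‖x‖ ^ s)⁻¹ := fun x ↦ by
    rw [← coe_nnnorm x, ENNReal.ofReal_coe_nnreal]
  simp_rw [hnorm]
  rw [setLIntegral_ball_fun_norm_addHaar μ (f := fun r ↦ (ENNReal.ofReal r ^ s)⁻¹) (by fun_prop)]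
  congr 1
  refine setLIntegral_congr_fun measurableSet_Ioo fun r hr ↦ ?_
  have hn : 1 ≤ Module.finrank ℝ E := Module.finrank_pos
  rw [ENNReal.ofReal_rpow_of_pos hr.1, ← ENNReal.ofReal_inv_of_pos (Real.rpow_pos_of_pos hr.1 s),
    ← ENNReal.ofReal_mul (pow_nonneg hr.1.le _), ← Real.rpow_natCast, ← Real.rpow_neg hr.1.le,
    ← Real.rpow_add hr.1, Nat.cast_sub hn, Nat.cast_one, sub_eq_add_neg _ s]

theorem setLIntegral_ball_nnnorm_rpow_inv_of_lt {s ρ : ℝ} (hs : s < Module.finrank ℝ E)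
    (hρ : 0 < ρ) :
    ∫⁻ x in ball 0 ρ, ((‖x‖₊ : ℝ≥0∞) ^ s)⁻¹ ∂μ = Module.finrank ℝ E * μ (ball 0 1) *
      ENNReal.ofReal (ρ ^ ((Module.finrank ℝ E : ℝ) - s) / ((Module.finrank ℝ E : ℝ) - s)) := by
  rw [setLIntegral_ball_nnnorm_rpow_inv, lintegral_Ioo_rpow_of_neg_one_lt (by linarith) hρ,
    show (Module.finrank ℝ E : ℝ) - 1 - s + 1 = Module.finrank ℝ E - s by ring]

theorem setLIntegral_ball_nnnorm_rpow_inv_of_le {s ρ : ℝ} (hs : Module.finrank ℝ E ≤ s)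
    (hρ : 0 < ρ) : ∫⁻ x in ball 0 ρ, ((‖x‖₊ : ℝ≥0∞) ^ s)⁻¹ ∂μ = ∞ := by
  rw [setLIntegral_ball_nnnorm_rpow_inv, lintegral_Ioo_rpow_of_le_neg_one (by linarith) hρ,
    ENNReal.mul_top]
  exact mul_ne_zero (by simp [Module.finrank_pos.ne']) (measure_ball_pos μ 0 one_pos).ne'

theorem setLIntegral_ball_nnnorm_rpow_inv_le {s ρ : ℝ} (hs : s < Module.finrank ℝ E)
    (hρ₀ : 0 < ρ) (hρ₁ : ρ ≤ 1) :
    ∫⁻ x in ball 0 ρ, ((‖x‖₊ : ℝ≥0∞) ^ s)⁻¹ ∂μ ≤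
      Module.finrank ℝ E * μ (ball 0 1) * ENNReal.ofReal ((Module.finrank ℝ E : ℝ) - s)⁻¹ := by
  rw [setLIntegral_ball_nnnorm_rpow_inv_of_lt μ hs hρ₀]
  gcongr
  rw [div_eq_mul_inv]
  exact mul_le_of_le_one_left (by simpa using hs.le) (Real.rpow_le_one hρ₀.le hρ₁ (by linarith))

end MeasureTheory

theorem inv_succ_pow_four_mul_setLIntegral_ball_le (ν : ℕ) {ρ : ℝ} (hρ₀ : 0 < ρ) (hρ₁ : ρ ≤ 1) :
    (((ν : ℝ≥0∞) + 1) ^ 4)⁻¹ *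
        ∫⁻ z in ball (0 : ℂ) ρ, ((‖z‖₊ : ℝ≥0∞) ^ (2 * (1 - 1 / ((ν : ℝ) + 1))))⁻¹ ≤
      2 * volume (ball (0 : ℂ) 1) * ENNReal.ofReal (1 / (2 * ((ν : ℝ) + 1) ^ 3)) := by
  have hν : (0 : ℝ) < ν + 1 := by positivity
  have hs : 2 * (1 - 1 / ((ν : ℝ) + 1)) < Module.finrank ℝ ℂ := by
    rw [Complex.finrank_real_complex]
    push_cast
    nlinarith [one_div_pos.2 hν]
  have hcoef : (((ν : ℝ≥0∞) + 1) ^ 4)⁻¹ = ENNReal.ofReal (((ν : ℝ) + 1) ^ 4)⁻¹ := by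
    rw [ENNReal.ofReal_inv_of_pos (by positivity), ENNReal.ofReal_pow hν.le]
    norm_cast
  have hint := setLIntegral_ball_nnnorm_rpow_inv_le volume hs hρ₀ hρ₁
  simp only [Complex.finrank_real_complex, Nat.cast_ofNat] at hint
  calc _ ≤ (((ν : ℝ≥0∞) + 1) ^ 4)⁻¹ * (2 * volume (ball (0 : ℂ) 1) *
          ENNReal.ofReal (2 - 2 * (1 - 1 / ((ν : ℝ) + 1)))⁻¹) := by gcongr
    _ = _ := by
        rw [hcoef, mul_left_comm, ← ENNReal.ofReal_mul (by positivity)]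
        congr 2
        field_simp
        ring

/-- The counterexample at the end of the paper: with `σ_ν = 1 - 1/ν` and `f_ν ≡ 1/ν²`,
the section `f = (f_ν)` is square integrable for the metric `h^σ` near `0`, but not for
any of the metrics `h^{(1+1/j)σ}`. -/
theorem stmt17 :
    (∀ ρ : ℝ, 0 < ρ → ρ ≤ 1 →
      ∫⁻ z in ball (0 : ℂ) ρ,
          ∑' ν : ℕ, ((((ν : ℝ≥0∞) + 1) ^ 4)⁻¹ *
            ((‖z‖₊ : ℝ≥0∞) ^ (2 * (1 - 1 / ((ν : ℝ) + 1))))⁻¹) < ∞) ∧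
    (∀ j : ℕ, 1 ≤ j → ∀ ρ : ℝ, 0 < ρ →
      ∫⁻ z in ball (0 : ℂ) ρ,
          ∑' ν : ℕ, ((((ν : ℝ≥0∞) + 1) ^ 4)⁻¹ *
            ((‖z‖₊ : ℝ≥0∞) ^ (2 * (1 + 1 / (j : ℝ)) * (1 - 1 / ((ν : ℝ) + 1))))⁻¹) = ∞) := by
  refine ⟨fun ρ hρ₀ hρ₁ ↦ ?_, fun j hj ρ hρ ↦ ?_⟩
  · have hsum : Summable fun ν : ℕ ↦ 1 / (2 * ((ν : ℝ) + 1) ^ 3) := by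
      have hcube := (summable_nat_add_iff 1).2 (Real.summable_one_div_nat_pow.2 (by norm_num : 1 < 3))
      refine (hcube.mul_left (1 / 2)).congr fun ν ↦ ?_
      push_cast
      rw [one_div_mul_one_div]
    rw [lintegral_tsum fun ν ↦ by fun_prop]
    calc _ ≤ ∑' ν : ℕ, 2 * volume (ball (0 : ℂ) 1) * ENNReal.ofReal (1 / (2 * ((ν : ℝ) + 1) ^ 3)) :=
          ENNReal.tsum_le_tsum fun ν ↦ by
            rw [lintegral_const_mul _ (by fun_prop)]
            exact inv_succ_pow_four_mul_setLIntegral_ball_le ν hρ₀ hρ₁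
      _ < ∞ := by
          rw [ENNReal.tsum_mul_left]
          exact ENNReal.mul_lt_top (ENNReal.mul_lt_top (by simp) measure_ball_lt_top)
            hsum.tsum_ofReal_lt_top
  · have hexp : 2 * (1 + 1 / (j : ℝ)) * (1 - 1 / ((j : ℝ) + 1)) = 2 := by
      field_simp
      ring
    refine eq_top_iff.2 (le_trans ?_ (lintegral_mono fun z ↦ ENNReal.le_tsum j))
    rw [lintegral_const_mul _ (by fun_prop), hexp,
      setLIntegral_ball_nnnorm_rpow_inv_of_le volume (by simp) hρ, ENNReal.mul_top (by simp)]
end
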